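/- For a hermitian circulant operator O on ℂ²⊗ℂ^d with non-negative real off-diagonal entries u_k ≥ 0 and real diagonal w_{ik}, the supremum of ⟨x⊗y|O|x⊗y⟩ over complex unit product vectors equals the supremum over real unit product vectors with non-negative components: sup over x∈ℂ², y∈ℂ^d equals sup over x∈ℝ²_{≥0}, y∈ℝ^d_{≥0}. -/

import Mathlib

/-!
The expectation value of `circOp` in `x ⊗ y` is the diagonal part
`∑ₖ (w₀ₖ |x₀|² + w₁ₖ |x₁|²) |yₖ|²`, which only sees the moduli of the amplitudes, plus the
hopping part `2 Re ∑ₖ uₖ x̄₀ x₁ ȳₖ yₖ₊₁`. Replacing every amplitude by its modulus keeps both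
vectors normalised and, as `uₖ ≥ 0`, can only increase the hopping part. So every value over
complex product vectors is dominated by one over non-negative real product vectors, which are
themselves complex product vectors; two mutually cofinal sets of reals have the same `sSup`.
-/

open Matrix

def circOp (d : ℕ) [NeZero d] (w : Fin 2 → Fin d → ℝ) (a : Fin d → ℂ) :
    Matrix (Fin 2 × Fin d) (Fin 2 × Fin d) ℂ :=
  Matrix.of fun p q =>
    (if p = q then (w p.1 p.2 : ℂ) else 0) +
    (if p.1 = 0 ∧ q.1 = 1 ∧ q.2 = p.2 + 1 then a p.2 else 0) +
    (if p.1 = 1 ∧ q.1 = 0 ∧ p.2 = q.2 + 1 then starRingEnd ℂ (a q.2) else 0)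

def tensorVec {m n : Type*} (x : m → ℂ) (y : n → ℂ) : m × n → ℂ := fun p => x p.1 * y p.2

open ComplexConjugate

lemma star_dotProduct_self_eq_sum_norm_sq {n : Type*} [Fintype n] (v : n → ℂ) :
    star v ⬝ᵥ v = ((∑ i, ‖v i‖ ^ 2 : ℝ) : ℂ) := by
  push_cast
  exact Finset.sum_congr rfl fun i _ => Complex.conj_mul' (v i)

lemma sum_sum_ite_eq_apply {ι M : Type*} [Fintype ι] [DecidableEq ι] [AddCommMonoid M]
    (g : ι → ι) (f : ι → ι → M) :
    (∑ i, ∑ j, if i = g j then f i j else 0) = ∑ j, f (g j) j := by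
  rw [Finset.sum_comm]
  simp

section circOp

variable {d : ℕ} [NeZero d] (w : Fin 2 → Fin d → ℝ) (a : Fin d → ℂ) (x : Fin 2 → ℂ) (y : Fin d → ℂ)

lemma star_tensorVec_dotProduct_circOp_mulVec :
    star (tensorVec x y) ⬝ᵥ circOp d w a *ᵥ tensorVec x y =
      ((∑ k, (w 0 k * ‖x 0‖ ^ 2 + w 1 k * ‖x 1‖ ^ 2) * ‖y k‖ ^ 2 : ℝ) : ℂ)
      + ∑ k, a k * (conj (x 0) * x 1 * conj (y k) * y (k + 1))
      + conj (∑ k, a k * (conj (x 0) * x 1 * conj (y k) * y (k + 1))) := by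
  simp only [dotProduct, mulVec, circOp, tensorVec, Matrix.of_apply, Pi.star_apply, star_mul',
    Fintype.sum_prod_type, Fin.sum_univ_two, mul_add, add_mul, Finset.sum_add_distrib,
    Finset.mul_sum, mul_ite, ite_mul, zero_mul, mul_zero, Finset.sum_ite_eq,
    Finset.sum_ite_eq', Finset.mem_univ, if_true, Fin.reduceEq, false_and, if_false,
    true_and, Finset.sum_const_zero, add_zero, zero_add, sum_sum_ite_eq_apply, RCLike.star_def,
    map_sum, map_mul, Complex.conj_conj]
  push_cast
  simp only [← Complex.conj_mul', ← Finset.sum_add_distrib]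
  exact Finset.sum_congr rfl fun k _ => by ring

lemma re_star_tensorVec_dotProduct_circOp_mulVec :
    (star (tensorVec x y) ⬝ᵥ circOp d w a *ᵥ tensorVec x y).re =
      ∑ k, (w 0 k * ‖x 0‖ ^ 2 + w 1 k * ‖x 1‖ ^ 2) * ‖y k‖ ^ 2
      + 2 * (∑ k, a k * (conj (x 0) * x 1 * conj (y k) * y (k + 1))).re := by
  rw [star_tensorVec_dotProduct_circOp_mulVec, Complex.add_re, Complex.add_re, Complex.conj_re,
    Complex.ofReal_re]
  ring

lemma re_star_tensorVec_dotProduct_circOp_mulVec_le_norm (u : Fin d → ℝ) (hu : ∀ k, 0 ≤ u k) :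
    (star (tensorVec x y) ⬝ᵥ circOp d w (fun k => (u k : ℂ)) *ᵥ tensorVec x y).re ≤
      (star (tensorVec (fun i => (‖x i‖ : ℂ)) (fun k => (‖y k‖ : ℂ))) ⬝ᵥ
        circOp d w (fun k => (u k : ℂ)) *ᵥ
          tensorVec (fun i => (‖x i‖ : ℂ)) (fun k => (‖y k‖ : ℂ))).re := by
  simp only [re_star_tensorVec_dotProduct_circOp_mulVec, Complex.norm_real, norm_norm,
    Complex.re_sum, Complex.re_ofReal_mul]
  gcongr _ + 2 * ∑ k, _ * ?_ with k
  · exact hu k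
  · refine (Complex.re_le_norm _).trans_eq ?_
    simp [← Complex.ofReal_mul]

end circOp

theorem circOp_sup_real_general (d : ℕ) [NeZero d]
    (w : Fin 2 → Fin d → ℝ) (u : Fin d → ℝ) (hu : ∀ k, 0 ≤ u k) :
    sSup {r : ℝ | ∃ (x : Fin 2 → ℂ) (y : Fin d → ℂ),
        star x ⬝ᵥ x = 1 ∧ star y ⬝ᵥ y = 1 ∧
        (star (tensorVec x y) ⬝ᵥ
          (circOp d w (fun k => (u k : ℂ))).mulVec (tensorVec x y)).re = r} =
    sSup {r : ℝ | ∃ (x : Fin 2 → ℝ) (y : Fin d → ℝ),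
        (∀ i, 0 ≤ x i) ∧ (∀ k, 0 ≤ y k) ∧
        (∑ i, x i ^ 2) = 1 ∧ (∑ k, y k ^ 2) = 1 ∧
        (star (tensorVec (fun i => (x i : ℂ)) (fun k => (y k : ℂ))) ⬝ᵥ
          (circOp d w (fun k => (u k : ℂ))).mulVec
            (tensorVec (fun i => (x i : ℂ)) (fun k => (y k : ℂ)))).re = r} := by
  refine csSup_eq_csSup_of_forall_exists_le ?_ ?_
  · rintro r ⟨x, y, hx, hy, rfl⟩
    refine ⟨_, ⟨fun i => ‖x i‖, fun k => ‖y k‖, fun _ => norm_nonneg _, fun _ => norm_nonneg _,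
      ?_, ?_, rfl⟩, re_star_tensorVec_dotProduct_circOp_mulVec_le_norm w x y u hu⟩
    · exact_mod_cast (star_dotProduct_self_eq_sum_norm_sq x).symm.trans hx
    · exact_mod_cast (star_dotProduct_self_eq_sum_norm_sq y).symm.trans hy
  · rintro r ⟨x, y, -, -, hx, hy, rfl⟩
    refine ⟨_, ⟨_, _, ?_, ?_, rfl⟩, le_rfl⟩
    · simp [star_dotProduct_self_eq_sum_norm_sq, hx]
    · simp [star_dotProduct_self_eq_sum_norm_sq, hy]

/-- For a circulant operator in real representation (`u_k ≥ 0`, `w` real), the supremum of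
the expectation value over complex unit product vectors equals the supremum over real unit
product vectors with non-negative components. -/
theorem circOp_sup_real (d : ℕ) [NeZero d] (hd : 2 ≤ d)
    (w : Fin 2 → Fin d → ℝ) (u : Fin d → ℝ) (hu : ∀ k, 0 ≤ u k) :
    sSup {r : ℝ | ∃ (x : Fin 2 → ℂ) (y : Fin d → ℂ),
        star x ⬝ᵥ x = 1 ∧ star y ⬝ᵥ y = 1 ∧
        (star (tensorVec x y) ⬝ᵥ
          (circOp d w (fun k => (u k : ℂ))).mulVec (tensorVec x y)).re = r} =
    sSup {r : ℝ | ∃ (x : Fin 2 → ℝ) (y : Fin d → ℝ),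
        (∀ i, 0 ≤ x i) ∧ (∀ k, 0 ≤ y k) ∧
        (∑ i, x i ^ 2) = 1 ∧ (∑ k, y k ^ 2) = 1 ∧
        (star (tensorVec (fun i => (x i : ℂ)) (fun k => (y k : ℂ))) ⬝ᵥ
          (circOp d w (fun k => (u k : ℂ))).mulVec
            (tensorVec (fun i => (x i : ℂ)) (fun k => (y k : ℂ)))).re = r} :=
  circOp_sup_real_general d w u hu
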